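/- arXiv:2411.03426 — 3 statements merged into one kernel-verified Lean document; each statement's English description precedes it below -/
import Mathlib

section
/- The von Neumann entropy of the isotropic state, S(F,d) = −F·log F − (1−F)·log((1−F)/(d²−1)) (with the convention 0·log 0 = 0), satisfies the lower bound S(F,d) ≥ (1−F)·(2·log d − 1/(d²−1)) for every integer d ≥ 2 and every F ∈ [0,1]. -/
/-!
Writing `log ((1 - F) / (d² - 1)) = log (1 - F) - log (d² - 1)`, the entropy splits as the binary
entropy of `F`, which is nonnegative, plus `(1 - F) log (d² - 1)`; and
`log (d² - 1) ≥ log d² - 1 / (d² - 1)` is `log t ≥ 1 - 1 / t` at `t = (d² - 1) / d²`.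
-/

open Real

lemma Real.mul_log_div {x y : ℝ} (hy : y ≠ 0) : x * log (x / y) = x * log x - x * log y := by
  rcases eq_or_ne x 0 with rfl | hx
  · simp
  · rw [log_div hx hy, mul_sub]

lemma Real.log_sub_one_div_le_log_sub_one {x : ℝ} (hx : 1 < x) :
    log x - 1 / (x - 1) ≤ log (x - 1) := by
  have hx₁ : 0 < x - 1 := sub_pos.2 hx
  have key := one_sub_inv_le_log_of_pos (div_pos hx₁ (by linarith : 0 < x))
  have h : 1 - ((x - 1) / x)⁻¹ = -(1 / (x - 1)) := by
    field_simp
    ring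
  rw [h, log_div hx₁.ne' (by linarith)] at key
  linarith

lemma Real.neg_mul_log_sub_mul_log_div_eq_binEntropy_add {F D : ℝ} (hD : D ≠ 0) :
    -F * log F - (1 - F) * log ((1 - F) / D) = binEntropy F + (1 - F) * log D := by
  rw [mul_log_div hD, binEntropy_eq_negMulLog_add_negMulLog_one_sub, negMulLog, negMulLog]
  ring

/-- The von Neumann entropy of the isotropic state
`S(F,d) = −F·log F − (1−F)·log((1−F)/(d²−1))` (with the convention `0·log 0 = 0`,
which is automatic since `Real.log 0 = 0`) satisfies the lower bound
`S(F,d) ≥ (1−F)·(2·log d − 1/(d²−1))`. -/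
theorem isoState_entropy_lower_bound (d : ℕ) (hd : 2 ≤ d) (F : ℝ)
    (hF : F ∈ Set.Icc (0 : ℝ) 1) :
    (1 - F) * (2 * Real.log d - 1 / ((d : ℝ) ^ 2 - 1)) ≤
      -F * Real.log F - (1 - F) * Real.log ((1 - F) / ((d : ℝ) ^ 2 - 1)) := by
  obtain ⟨hF₀, hF₁⟩ := hF
  have hd₂ : (2 : ℝ) ≤ d := by exact_mod_cast hd
  have hd_sq : 1 < (d : ℝ) ^ 2 := by nlinarith
  have hlog_sq : log ((d : ℝ) ^ 2) = 2 * log d := by simp [log_pow]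
  rw [neg_mul_log_sub_mul_log_div_eq_binEntropy_add (sub_pos.2 hd_sq).ne']
  calc (1 - F) * (2 * log d - 1 / ((d : ℝ) ^ 2 - 1))
      ≤ (1 - F) * log ((d : ℝ) ^ 2 - 1) :=
        mul_le_mul_of_nonneg_left (hlog_sq ▸ log_sub_one_div_le_log_sub_one hd_sq)
          (sub_nonneg.2 hF₁)
    _ ≤ binEntropy F + (1 - F) * log ((d : ℝ) ^ 2 - 1) :=
        le_add_of_nonneg_left (binEntropy_nonneg hF₀ hF₁)
end

section
/- The partial transpose of the isotropic state ρ_F has exactly two eigenvalues: (1 + dF)/(d(d+1)) with multiplicity d(d+1)/2 (on the symmetric subspace) and (1 − dF)/(d(d−1)) with multiplicity d(d−1)/2 (on the antisymmetric subspace); in particular, ρ_F^Γ has a negative eigenvalue if and only if F > 1/d. -/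
open Matrix Polynomial

/-- The maximally entangled unit vector `v = d^{-1/2} Σ_i e_i ⊗ e_i` in `ℂ^d ⊗ ℂ^d`. -/
noncomputable def maxEntVec (d : ℕ) : (Fin d × Fin d) → ℂ :=
  fun p => if p.1 = p.2 then ((1 / Real.sqrt d : ℝ) : ℂ) else 0

/-- The orthogonal projection `P = v v†` onto the maximally entangled vector. -/
noncomputable def projMaxEnt (d : ℕ) : Matrix (Fin d × Fin d) (Fin d × Fin d) ℂ :=
  Matrix.vecMulVec (maxEntVec d) (star (maxEntVec d))

/-- The isotropic state `ρ_F = F·P + ((1−F)/(d²−1))·(I − P)`. -/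
noncomputable def isoState (d : ℕ) (F : ℝ) : Matrix (Fin d × Fin d) (Fin d × Fin d) ℂ :=
  (F : ℂ) • projMaxEnt d + (((1 - F) / ((d : ℝ) ^ 2 - 1) : ℝ) : ℂ) • (1 - projMaxEnt d)

/-- The partial transpose on the second tensor factor:
`(M^Γ)_{(i,j),(k,l)} = M_{(i,l),(k,j)}`. -/
def ptranspose {d : ℕ} (M : Matrix (Fin d × Fin d) (Fin d × Fin d) ℂ) :
    Matrix (Fin d × Fin d) (Fin d × Fin d) ℂ :=
  Matrix.of fun p q => M (p.1, q.2) (q.1, p.2)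

/-! ### Auxiliary development -/

section Aux

/-- characteristic polynomial is invariant under similarity -/
theorem aux_charpoly_similar {n : Type*} [Fintype n] [DecidableEq n]
    (U V D M : Matrix n n ℂ) (hVU : V * U = 1) (hM : M = U * D * V) :
    M.charpoly = D.charpoly := by
  have hUV : U * V = 1 := mul_eq_one_comm.mp hVU
  unfold Matrix.charpoly
  have : charmatrix M = U.map C * charmatrix D * V.map C := by
    rw [charmatrix, charmatrix, hM]
    rw [Matrix.mul_sub, Matrix.sub_mul]
    congr 1
    · rw [← (Matrix.scalar_commute X (fun r => Commute.all X r) (U.map C)).eq,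
        Matrix.mul_assoc, ← Matrix.map_mul, hUV]
      simp
    · simp [Matrix.map_mul, RingHom.mapMatrix_apply, Matrix.mul_assoc]
  rw [this, det_mul, det_mul, mul_comm, ← mul_assoc, ← det_mul, ← Matrix.map_mul, hVU]
  simp

theorem aux_charpoly_diag {n : Type*} [Fintype n] [DecidableEq n] (v : n → ℂ) :
    (Matrix.diagonal v).charpoly = ∏ i, (X - C (v i)) := by
  rw [Matrix.charpoly, charmatrix, RingHom.mapMatrix_apply, Matrix.scalar_apply,
    Matrix.diagonal_map (by simp), Matrix.diagonal_sub, Matrix.det_diagonal]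

/-- the swap (flip) matrix on `ℂ^d ⊗ ℂ^d` -/
def swapMat (d : ℕ) : Matrix (Fin d × Fin d) (Fin d × Fin d) ℂ :=
  Matrix.of fun p q => if p.1 = q.2 ∧ p.2 = q.1 then 1 else 0

theorem swapMat_mul_self (d : ℕ) : swapMat d * swapMat d = 1 := by
  ext p q
  rw [Matrix.mul_apply]
  rw [Finset.sum_eq_single (q.2, q.1)]
  · simp only [swapMat, Matrix.of_apply, Matrix.one_apply]
    by_cases h : p = q
    · simp [h]
    · have : ¬(p.1 = q.1 ∧ p.2 = q.2) := fun hc => h (Prod.ext hc.1 hc.2)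
      simp [h]
      intro h1 h2
      exact absurd (Prod.ext h1 h2) h
  · intro r _ hr
    have : ¬(r.1 = q.2 ∧ r.2 = q.1) := fun hc => hr (Prod.ext hc.1 hc.2)
    simp [swapMat, this]
  · intro h
    exact absurd (Finset.mem_univ _) h

theorem swapMat_transpose (d : ℕ) : (swapMat d)ᵀ = swapMat d := by
  ext p q
  simp only [Matrix.transpose_apply, swapMat, Matrix.of_apply]
  refine if_congr ?_ rfl rfl
  constructor <;> rintro ⟨a, b⟩ <;> exact ⟨b.symm, a.symm⟩

/-- the sign vector used in the symmetrizing basis -/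
def epsv (d : ℕ) : Fin d × Fin d → ℂ :=
  fun q => if q.1 < q.2 then 1 else if q.1 = q.2 then 0 else -1

/-- the change-of-basis matrix to the symmetric/antisymmetric basis -/
noncomputable def Umat (d : ℕ) : Matrix (Fin d × Fin d) (Fin d × Fin d) ℂ :=
  1 + swapMat d * Matrix.diagonal (epsv d)

/-- inverse of `Umat` -/
noncomputable def Vmat (d : ℕ) : Matrix (Fin d × Fin d) (Fin d × Fin d) ℂ :=
  Matrix.diagonal (fun q => if q.1 = q.2 then 1 else 2⁻¹) * (Umat d)ᵀ

theorem Umat_transpose (d : ℕ) :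
    (Umat d)ᵀ = 1 + Matrix.diagonal (epsv d) * swapMat d := by
  rw [Umat, Matrix.transpose_add, Matrix.transpose_one, Matrix.transpose_mul,
    Matrix.diagonal_transpose, swapMat_transpose]

theorem eps_anticomm (d : ℕ) :
    Matrix.diagonal (epsv d) * swapMat d + swapMat d * Matrix.diagonal (epsv d) = 0 := by
  ext p q
  simp only [Matrix.add_apply, Matrix.diagonal_mul, Matrix.mul_diagonal, Matrix.zero_apply,
    swapMat, Matrix.of_apply]
  by_cases h : p.1 = q.2 ∧ p.2 = q.1
  · obtain ⟨h1, h2⟩ := h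
    simp only [h1, h2, and_self, ite_true, mul_one, one_mul, epsv]
    rcases lt_trichotomy q.1 q.2 with hlt | heq | hgt
    · simp [hlt, hlt.ne, not_lt_of_gt hlt, hlt.ne']
    · simp [heq]
    · simp [hgt, hgt.ne, not_lt_of_gt hgt, hgt.ne']
  · simp [h]

theorem swapMat_mul_Umat (d : ℕ) :
    swapMat d * Umat d = swapMat d + Matrix.diagonal (epsv d) := by
  rw [Umat, Matrix.mul_add, Matrix.mul_one, ← Matrix.mul_assoc, swapMat_mul_self, one_mul]

theorem Vmat_mul_Umat (d : ℕ) : Vmat d * Umat d = 1 := by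
  have hUU : (Umat d)ᵀ * Umat d
      = Matrix.diagonal (fun q : Fin d × Fin d => if q.1 = q.2 then 1 else 2) := by
    rw [Umat_transpose, Matrix.add_mul, one_mul, Matrix.mul_assoc, swapMat_mul_Umat, Umat]
    -- (1 + S*E) + E*(S + E)
    rw [Matrix.mul_add, Matrix.diagonal_mul_diagonal]
    have h0 : ∀ x y z w : Matrix (Fin d × Fin d) (Fin d × Fin d) ℂ,
        x + y + (z + w) = (z + y) + (x + w) := by intro x y z w; abel
    rw [h0, eps_anticomm, zero_add]
    ext p q
    by_cases hpq : p = q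
    · subst hpq
      simp only [Matrix.add_apply, Matrix.one_apply_eq, Matrix.diagonal_apply_eq, epsv]
      rcases lt_trichotomy p.1 p.2 with hlt | heq | hgt
      · simp [hlt, hlt.ne]; norm_num
      · simp [heq]
      · simp [hgt, hgt.ne, not_lt_of_gt hgt, hgt.ne']; norm_num
    · simp [Matrix.one_apply_ne hpq, Matrix.diagonal_apply_ne _ hpq]
  rw [Vmat, Matrix.mul_assoc, hUU, Matrix.diagonal_mul_diagonal]
  ext p q
  by_cases hpq : p = q
  · subst hpq
    by_cases h : p.1 = p.2 <;>
      simp [Matrix.diagonal_apply_eq, Matrix.one_apply_eq, h] <;> norm_num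
  · simp [Matrix.diagonal_apply_ne _ hpq, Matrix.one_apply_ne hpq]

/-- the key intertwining relation -/
theorem mul_Umat (d : ℕ) (α β : ℂ) :
    ((α • 1 + β • swapMat d) : Matrix (Fin d × Fin d) (Fin d × Fin d) ℂ) * Umat d
      = Umat d * Matrix.diagonal (fun q => if q.1 ≤ q.2 then α + β else α - β) := by
  have hG : Matrix.diagonal (fun q : Fin d × Fin d => if q.1 ≤ q.2 then α + β else α - β)
      = α • 1 + β • Matrix.diagonal (fun q => if q.1 ≤ q.2 then 1 else -1) := by
    ext p q
    by_cases hpq : p = q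
    · subst hpq
      by_cases h : p.1 ≤ p.2 <;>
        simp [Matrix.diagonal_apply_eq, Matrix.one_apply_eq, h] <;> ring
    · simp [Matrix.diagonal_apply_ne _ hpq, Matrix.one_apply_ne hpq]
  have hED : Matrix.diagonal (epsv d)
        * Matrix.diagonal (fun q : Fin d × Fin d => if q.1 ≤ q.2 then α + β else α - β)
      = α • Matrix.diagonal (epsv d)
        + β • Matrix.diagonal (fun q : Fin d × Fin d => if q.1 = q.2 then 0 else 1) := by
    rw [Matrix.diagonal_mul_diagonal]
    ext p q
    by_cases hpq : p = q
    · subst hpq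
      simp only [Matrix.diagonal_apply_eq, Matrix.add_apply, Matrix.smul_apply, smul_eq_mul,
        epsv]
      rcases lt_trichotomy p.1 p.2 with hlt | heq | hgt
      · simp [hlt, hlt.ne, hlt.le]
        try ring
      · simp [heq]
      · simp [hgt, hgt.ne, not_lt_of_gt hgt, hgt.ne', not_le_of_gt hgt]
        try ring
    · simp [Matrix.diagonal_apply_ne _ hpq]
  have hkey : swapMat d + Matrix.diagonal (epsv d)
      = Matrix.diagonal (fun q : Fin d × Fin d => if q.1 ≤ q.2 then 1 else -1)
        + swapMat d * Matrix.diagonal (fun q : Fin d × Fin d => if q.1 = q.2 then 0 else 1) := by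
    ext p q
    simp only [Matrix.add_apply, Matrix.mul_diagonal, swapMat, Matrix.of_apply]
    by_cases hpq : p = q <;> by_cases hs : p.1 = q.2 ∧ p.2 = q.1
    · subst hpq
      have hdiag : p.1 = p.2 := hs.1
      simp [if_pos hs, epsv, hdiag]
    · subst hpq
      have hdiag : ¬ p.1 = p.2 := fun h => hs ⟨h, h.symm⟩
      simp only [if_neg hs, Matrix.diagonal_apply_eq, mul_zero, add_zero, mul_one, epsv,
        if_neg hdiag, zero_add]
      rcases lt_trichotomy p.1 p.2 with hlt | heq | hgt
      · simp [hlt, hlt.le, hdiag]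
      · exact absurd heq hdiag
      · simp [not_lt_of_gt hgt, hdiag, not_le_of_gt hgt]
    · obtain ⟨h1, h2⟩ := hs
      have hdiag : ¬ q.1 = q.2 := by
        intro h
        exact hpq (Prod.ext (h1.trans h.symm) (h2.trans h))
      have hpq' : p ≠ q := hpq
      simp [h1, h2, Matrix.diagonal_apply_ne _ hpq', hdiag]
    · have hpq' : p ≠ q := hpq
      simp [hs, Matrix.diagonal_apply_ne _ hpq']
  conv_lhs => rw [Matrix.add_mul, Matrix.smul_mul, Matrix.smul_mul, one_mul, swapMat_mul_Umat,
    hkey]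
  conv_rhs => rw [Umat, Matrix.add_mul, one_mul, Matrix.mul_assoc, hED, hG, Matrix.mul_add,
    mul_smul_comm, mul_smul_comm]
  rw [Umat]
  simp only [smul_add]
  abel

theorem ptranspose_isoState_eq (d : ℕ) (hd : 2 ≤ d) (F : ℝ) :
    ptranspose (isoState d F) =
      (((1 - F) / ((d:ℝ)^2 - 1) : ℝ) : ℂ) • (1 : Matrix (Fin d × Fin d) (Fin d × Fin d) ℂ) +
      (((F - (1 - F) / ((d:ℝ)^2 - 1)) / d : ℝ) : ℂ) • swapMat d := by
  have hd0 : (d:ℝ) ≠ 0 := by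
    have : 0 < d := by omega
    exact_mod_cast this.ne'
  have hP : ∀ p q : Fin d × Fin d, projMaxEnt d p q
      = if p.1 = p.2 ∧ q.1 = q.2 then ((1/(d:ℝ) : ℝ) : ℂ) else 0 := by
    intro p q
    simp only [projMaxEnt, Matrix.vecMulVec_apply, maxEntVec, Pi.star_apply]
    by_cases h1 : p.1 = p.2 <;> by_cases h2 : q.1 = q.2 <;>
      simp [h1, h2, Complex.star_def, Complex.conj_ofReal, ← Complex.ofReal_mul,
        div_mul_div_comm, Real.mul_self_sqrt (by positivity : (0:ℝ) ≤ (d:ℝ))] <;>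
      (try (rw [← mul_inv, ← Complex.ofReal_mul,
        Real.mul_self_sqrt (Nat.cast_nonneg d)]; norm_num))
  ext p q
  have hBA : ((p.1, q.2) : Fin d × Fin d) = (q.1, p.2) ↔ p = q := by
    constructor <;> intro h <;>
      · rw [Prod.ext_iff] at h ⊢
        exact ⟨h.1, h.2.symm⟩
  simp only [ptranspose, Matrix.of_apply, isoState, Matrix.add_apply, Matrix.smul_apply,
    Matrix.sub_apply, Matrix.one_apply, hP, swapMat, smul_eq_mul]
  by_cases hA : p.1 = q.2 ∧ p.2 = q.1 <;> by_cases hB : p = q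
  · simp only [if_pos (show p.1 = q.2 ∧ q.1 = p.2 from ⟨hA.1, hA.2.symm⟩), if_pos hA,
      if_pos (hBA.mpr hB), if_pos hB]
    push_cast
    have h1 : ((d:ℂ)^2 - 1) ≠ 0 := by
      intro h
      have : ((d:ℝ)^2 - 1) = 0 := by exact_mod_cast h
      nlinarith [show (2:ℝ) ≤ (d:ℝ) by exact_mod_cast hd]
    have h2 : (d:ℂ) ≠ 0 := by exact_mod_cast hd0
    field_simp
    ring
  · simp only [if_pos (show p.1 = q.2 ∧ q.1 = p.2 from ⟨hA.1, hA.2.symm⟩), if_pos hA,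
      if_neg (fun h => hB (hBA.mp h)), if_neg hB]
    push_cast
    have h1 : ((d:ℂ)^2 - 1) ≠ 0 := by
      intro h
      have : ((d:ℝ)^2 - 1) = 0 := by exact_mod_cast h
      nlinarith [show (2:ℝ) ≤ (d:ℝ) by exact_mod_cast hd]
    have h2 : (d:ℂ) ≠ 0 := by exact_mod_cast hd0
    field_simp
    ring
  · simp only [if_neg (show ¬(p.1 = q.2 ∧ q.1 = p.2) from fun h => hA ⟨h.1, h.2.symm⟩),
      if_neg hA, if_pos (hBA.mpr hB), if_pos hB]
    ring
  · simp only [if_neg (show ¬(p.1 = q.2 ∧ q.1 = p.2) from fun h => hA ⟨h.1, h.2.symm⟩),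
      if_neg hA, if_neg (fun h => hB (hBA.mp h)), if_neg hB]
    ring

theorem card_le_filter (d : ℕ) (hd : 2 ≤ d) :
    (Finset.univ.filter fun q : Fin d × Fin d => q.1 ≤ q.2).card = d * (d + 1) / 2 := by
  rw [Finset.card_filter, Fintype.sum_prod_type]
  have h1 : ∀ i : Fin d, (∑ j : Fin d, if i ≤ j then (1:ℕ) else 0) = d - i.val := by
    intro i
    rw [← Finset.card_filter]
    have : (Finset.univ.filter fun j : Fin d => i ≤ j) = Finset.Ici i := by
      ext j; simp [Finset.mem_Ici]
    rw [this, Fin.card_Ici]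
  simp only [h1]
  rw [Fin.sum_univ_eq_sum_range (fun k => d - k) d]
  rw [← Finset.sum_range_reflect]
  have h2 : ∀ j ∈ Finset.range d, d - (d - 1 - j) = j + 1 := by
    intro j hj
    rw [Finset.mem_range] at hj
    omega
  rw [Finset.sum_congr rfl h2, Finset.sum_add_distrib, Finset.sum_const, Finset.card_range,
    Finset.sum_range_id, smul_eq_mul, mul_one]
  obtain ⟨e, rfl⟩ : ∃ e, d = e + 2 := ⟨d - 2, by omega⟩
  have hb : (e + 2) * (e + 1) % 2 = 0 := by
    rcases Nat.even_or_odd e with ⟨k, hk⟩ | ⟨k, hk⟩ <;> subst hk <;> ring_nf <;> omega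
  rw [show e + 2 - 1 = e + 1 from rfl,
    show (e + 2) * (e + 2 + 1) = (e + 2) * (e + 1) + 2 * (e + 2) from by ring]
  omega

theorem card_not_filter (d : ℕ) (hd : 2 ≤ d) :
    (Finset.univ.filter fun q : Fin d × Fin d => ¬ q.1 ≤ q.2).card = d * (d - 1) / 2 := by
  rw [Finset.card_filter, Fintype.sum_prod_type]
  have h1 : ∀ i : Fin d, (∑ j : Fin d, if ¬ i ≤ j then (1:ℕ) else 0) = i.val := by
    intro i
    rw [← Finset.card_filter]
    have : (Finset.univ.filter fun j : Fin d => ¬ i ≤ j) = Finset.Iio i := by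
      ext j; simp [Finset.mem_Iio]
    rw [this, Fin.card_Iio]
  simp only [h1]
  rw [Fin.sum_univ_eq_sum_range (fun k => k) d, Finset.sum_range_id]

end Aux

/-- The partial transpose of the isotropic state has exactly two eigenvalues:
`(1 + dF)/(d(d+1))` with multiplicity `d(d+1)/2` (symmetric subspace) and
`(1 − dF)/(d(d−1))` with multiplicity `d(d−1)/2` (antisymmetric subspace);
in particular, `ρ_F^Γ` has a negative eigenvalue iff `F > 1/d`. -/
theorem ptranspose_isoState_charpoly (d : ℕ) (hd : 2 ≤ d) (F : ℝ)
    (hF : F ∈ Set.Icc (0 : ℝ) 1) :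
    (ptranspose (isoState d F)).charpoly =
        (X - C (((1 + d * F) / (d * (d + 1)) : ℝ) : ℂ)) ^ (d * (d + 1) / 2) *
          (X - C (((1 - d * F) / (d * (d - 1)) : ℝ) : ℂ)) ^ (d * (d - 1) / 2) ∧
      ((∃ μ : ℝ, μ < 0 ∧ (ptranspose (isoState d F)).charpoly.IsRoot (μ : ℂ)) ↔
        1 / (d : ℝ) < F) := by
  have hdR : (2:ℝ) ≤ (d:ℝ) := by exact_mod_cast hd
  have hd0 : (0:ℝ) < (d:ℝ) := by linarith
  have hd1 : (0:ℝ) < (d:ℝ) - 1 := by linarith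
  have hdsq : ((d:ℝ)^2 - 1) ≠ 0 := by nlinarith
  set α' : ℝ := (1 - F) / ((d:ℝ)^2 - 1) with hα'
  set β' : ℝ := (F - α') / d with hβ'
  set a : ℝ := (1 + d * F) / (d * (d + 1)) with ha
  set b : ℝ := (1 - d * F) / (d * (d - 1)) with hb
  have hab1 : a = α' + β' := by
    rw [ha, hα', hβ', hα']
    have : (d:ℝ)^2 - 1 = ((d:ℝ) - 1) * ((d:ℝ) + 1) := by ring
    field_simp
    ring
  have hab2 : b = α' - β' := by
    rw [hb, hα', hβ', hα']
    field_simp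
    ring
  -- part 1 : the charpoly
  have hM : ptranspose (isoState d F) = (α' : ℂ) • 1 + (β' : ℂ) • swapMat d :=
    ptranspose_isoState_eq d hd F
  have hsim : ptranspose (isoState d F)
      = Umat d * Matrix.diagonal
          (fun q : Fin d × Fin d => if q.1 ≤ q.2 then (α':ℂ) + β' else (α':ℂ) - β')
        * Vmat d := by
    have hUV : Umat d * Vmat d = 1 := mul_eq_one_comm.mp (Vmat_mul_Umat d)
    calc ptranspose (isoState d F)
        = (ptranspose (isoState d F) * Umat d) * Vmat d := by
          rw [Matrix.mul_assoc, hUV, Matrix.mul_one]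
      _ = _ := by rw [hM, mul_Umat]
  have hdiagval : (fun q : Fin d × Fin d => if q.1 ≤ q.2 then (α':ℂ) + β' else (α':ℂ) - β')
      = fun q : Fin d × Fin d => if q.1 ≤ q.2 then ((a:ℝ):ℂ) else ((b:ℝ):ℂ) := by
    funext q
    rw [hab1, hab2]
    push_cast
    rfl
  rw [hdiagval] at hsim
  have part1 : (ptranspose (isoState d F)).charpoly =
      (X - C ((a:ℝ):ℂ)) ^ (d * (d + 1) / 2) * (X - C ((b:ℝ):ℂ)) ^ (d * (d - 1) / 2) := by
    rw [aux_charpoly_similar (Umat d) (Vmat d) _ _ (Vmat_mul_Umat d) hsim,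
      aux_charpoly_diag]
    have : ∀ q : Fin d × Fin d,
        (X - C (if q.1 ≤ q.2 then ((a:ℝ):ℂ) else ((b:ℝ):ℂ)))
          = if q.1 ≤ q.2 then (X - C ((a:ℝ):ℂ)) else (X - C ((b:ℝ):ℂ)) := by
      intro q; split_ifs <;> rfl
    simp only [this]
    rw [Finset.prod_ite, Finset.prod_const, Finset.prod_const,
      card_le_filter d hd, card_not_filter d hd]
  refine ⟨part1, ?_⟩
  have hm : 0 < d * (d + 1) / 2 := by
    have h6 : 2 * 3 ≤ d * (d + 1) := Nat.mul_le_mul hd (by omega)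
    exact Nat.div_pos (by omega) (by omega)
  have hn : 0 < d * (d - 1) / 2 := by
    have h2 : 2 * 1 ≤ d * (d - 1) := Nat.mul_le_mul hd (by omega)
    exact Nat.div_pos (by omega) (by omega)
  have ha_pos : 0 < a := by
    rw [ha]
    have : (0:ℝ) < 1 + d * F := by nlinarith [hF.1]
    positivity
  have hbden : (0:ℝ) < (d:ℝ) * ((d:ℝ) - 1) := by positivity
  constructor
  · rintro ⟨μ, hμneg, hroot⟩
    rw [part1] at hroot
    simp only [IsRoot, eval_mul, eval_pow, eval_sub, eval_X, eval_C, mul_eq_zero,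
      pow_eq_zero_iff hm.ne', pow_eq_zero_iff hn.ne', sub_eq_zero] at hroot
    rcases hroot with h | h
    · exfalso
      have : μ = a := by exact_mod_cast h
      linarith
    · have hμb : μ = b := by exact_mod_cast h
      have hb_neg : b < 0 := hμb ▸ hμneg
      rw [hb, div_neg_iff] at hb_neg
      rcases hb_neg with ⟨h1, h2⟩ | ⟨h1, h2⟩
      · linarith
      · rw [div_lt_iff₀ hd0]
        nlinarith
  · intro hlt
    refine ⟨b, ?_, ?_⟩
    · rw [hb]
      apply div_neg_of_neg_of_pos _ hbden
      rw [div_lt_iff₀ hd0] at hlt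
      nlinarith
    · rw [part1]
      simp only [IsRoot, eval_mul, eval_pow, eval_sub, eval_X, eval_C]
      have : ((b:ℝ):ℂ) - ((b:ℝ):ℂ) = 0 := sub_self _
      rw [this, zero_pow hn.ne', mul_zero]
end

section
/- For F ∈ [1/d, 1], the trace norm of the partial transpose of the isotropic state equals dF: the sum of the absolute values of the eigenvalues of ρ_F^Γ is exactly d·F. Consequently the logarithmic negativity of ρ_F equals log(dF) = log d + log F, which is extensive (of order log d) even when F is exponentially small in log d, as long as dF ≥ 1. -/
/-!
Partially transposing `P` gives `S / d`, where `S` is the swap operator, so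
`ρ_F^Γ = c • 1 + s • S` with `c = (1 - F) / (d² - 1)` and `s = (F - c) / d`. As `S² = 1`, every
eigenvalue `λ` satisfies `(λ - c)² = s²`, i.e. `λ = c ± s`, and `F ≥ 1 / d` is exactly the condition
`c ≤ s`. On `{c + s, c - s}` the absolute value agrees with the affine function
`λ ↦ (c λ + s² - c²) / s`, so the trace norm is `(c · tr ρ_F^Γ + d² (s² - c²)) / s`, which equals
`d F` because `tr ρ_F^Γ = tr ρ_F = 1`.
-/

open Matrix

open Finset

theorem abs_mul_eq_of_sub_sq_eq {x c s : ℝ} (h : (x - c) ^ 2 = s ^ 2) (hc : 0 ≤ c) (hcs : c ≤ s) :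
    |x| * s = c * x + (s ^ 2 - c ^ 2) := by
  obtain h | h := sq_eq_sq_iff_eq_or_eq_neg.mp h
  · rw [abs_of_nonneg (by linarith), sub_eq_iff_eq_add'.mp h]; ring
  · rw [abs_of_nonpos (by linarith), sub_eq_iff_eq_add'.mp h]; ring

namespace Matrix.IsHermitian

variable {n 𝕜 : Type*} [Fintype n] [DecidableEq n] [RCLike 𝕜] {A : Matrix n n 𝕜}

theorem eigenvalues_sub_sq_eq (hA : A.IsHermitian) {c r : ℝ}
    (h : (A - (c : 𝕜) • 1) * (A - (c : 𝕜) • 1) = (r : 𝕜) • 1) (i : n) :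
    (hA.eigenvalues i - c) ^ 2 = r := by
  set v : n → 𝕜 := ⇑(hA.eigenvectorBasis i)
  have hv0 : v ≠ 0 := fun h0 =>
    hA.eigenvectorBasis.orthonormal.ne_zero i (by ext j; exact congrFun h0 j)
  have hv : (A - (c : 𝕜) • 1) *ᵥ v = ((hA.eigenvalues i - c : ℝ) : 𝕜) • v := by
    rw [sub_mulVec, hA.mulVec_eigenvectorBasis, smul_mulVec, one_mulVec,
      RCLike.real_smul_eq_coe_smul (K := 𝕜), RCLike.ofReal_sub, sub_smul]
  have hv2 := congrArg (· *ᵥ v) h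
  simp only [← mulVec_mulVec, hv, mulVec_smul, smul_smul, smul_mulVec, one_mulVec] at hv2
  rw [sq]
  exact_mod_cast smul_left_injective 𝕜 hv0 hv2

theorem sum_abs_eigenvalues_mul_eq (hA : A.IsHermitian) {c s : ℝ}
    (h : (A - (c : 𝕜) • 1) * (A - (c : 𝕜) • 1) = ((s ^ 2 : ℝ) : 𝕜) • 1)
    (hc : 0 ≤ c) (hcs : c ≤ s) :
    (∑ i, |hA.eigenvalues i|) * s = c * RCLike.re A.trace + Fintype.card n * (s ^ 2 - c ^ 2) := by
  rw [sum_mul, Fintype.sum_congr _ _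
      fun i => abs_mul_eq_of_sub_sq_eq (hA.eigenvalues_sub_sq_eq h i) hc hcs,
    sum_add_distrib, ← mul_sum, sum_const, hA.trace_eq_sum_eigenvalues, nsmul_eq_mul]
  simp

end Matrix.IsHermitian

abbrev swapMatrix (α R : Type*) [DecidableEq α] [Zero R] [One R] : Matrix (α × α) (α × α) R :=
  Equiv.Perm.permMatrix R (Equiv.prodComm α α)

theorem swapMatrix_mul_self (α R : Type*) [Fintype α] [DecidableEq α] [NonAssocSemiring R] :
    swapMatrix α R * swapMatrix α R = 1 := by
  rw [← permMatrix_mul]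
  exact permMatrix_one

section PartialTranspose

variable {d : ℕ}

theorem ptranspose_add (M N : Matrix (Fin d × Fin d) (Fin d × Fin d) ℂ) :
    ptranspose (M + N) = ptranspose M + ptranspose N := rfl

theorem ptranspose_sub (M N : Matrix (Fin d × Fin d) (Fin d × Fin d) ℂ) :
    ptranspose (M - N) = ptranspose M - ptranspose N := rfl

theorem ptranspose_smul (a : ℂ) (M : Matrix (Fin d × Fin d) (Fin d × Fin d) ℂ) :
    ptranspose (a • M) = a • ptranspose M := rfl

theorem ptranspose_one : ptranspose (1 : Matrix (Fin d × Fin d) (Fin d × Fin d) ℂ) = 1 := by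
  ext ⟨i, j⟩ ⟨k, l⟩
  simp only [ptranspose, of_apply, one_apply, Prod.mk.injEq]
  congr 1
  exact propext ⟨fun ⟨h1, h2⟩ => ⟨h1, h2.symm⟩, fun ⟨h1, h2⟩ => ⟨h1, h2.symm⟩⟩

theorem trace_ptranspose (M : Matrix (Fin d × Fin d) (Fin d × Fin d) ℂ) :
    (ptranspose M).trace = M.trace := rfl

end PartialTranspose

theorem projMaxEnt_apply (d : ℕ) (p q : Fin d × Fin d) :
    projMaxEnt d p q = if p.1 = p.2 ∧ q.1 = q.2 then (d : ℂ)⁻¹ else 0 := by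
  have hsq : (Real.sqrt d : ℂ)⁻¹ * (Real.sqrt d : ℂ)⁻¹ = (d : ℂ)⁻¹ := by
    rw [← mul_inv, ← Complex.ofReal_mul, Real.mul_self_sqrt d.cast_nonneg, Complex.ofReal_natCast]
  by_cases hp : p.1 = p.2 <;> by_cases hq : q.1 = q.2 <;>
    simp [projMaxEnt, maxEntVec, vecMulVec_apply, hp, hq, hsq]

theorem ptranspose_projMaxEnt (d : ℕ) :
    ptranspose (projMaxEnt d) = (d : ℂ)⁻¹ • swapMatrix (Fin d) ℂ := by
  ext ⟨i, j⟩ ⟨k, l⟩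
  simp only [ptranspose, of_apply, projMaxEnt_apply, Matrix.smul_apply, PEquiv.toMatrix_apply,
    Equiv.toPEquiv_apply, Equiv.prodComm_apply, Prod.swap_prod_mk, Option.mem_def,
    Option.some.injEq, Prod.mk.injEq, smul_eq_mul, mul_ite, mul_one, mul_zero]
  congr 1
  exact propext ⟨fun ⟨h1, h2⟩ => ⟨h2.symm, h1⟩, fun ⟨h1, h2⟩ => ⟨h2, h1.symm⟩⟩

theorem trace_projMaxEnt {d : ℕ} (hd : d ≠ 0) : (projMaxEnt d).trace = 1 := by
  simp [trace, projMaxEnt_apply, Fintype.sum_prod_type, hd]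

theorem ptranspose_smul_projMaxEnt_add_smul_one_sub (d : ℕ) (a b : ℂ) :
    ptranspose (a • projMaxEnt d + b • (1 - projMaxEnt d)) =
      b • 1 + ((a - b) / d) • swapMatrix (Fin d) ℂ := by
  rw [ptranspose_add, ptranspose_smul, ptranspose_smul, ptranspose_sub, ptranspose_one,
    ptranspose_projMaxEnt]
  module

theorem trace_isoState {d : ℕ} (hd : 1 < d) (F : ℝ) : (isoState d F).trace = 1 := by
  have hD : (d : ℂ) ^ 2 - 1 ≠ 0 := by
    rw [sub_ne_zero]; exact_mod_cast (Nat.one_lt_pow two_ne_zero hd).ne'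
  simp only [isoState, trace_add, trace_smul, trace_sub, trace_one,
    trace_projMaxEnt (d := d) (by omega), Fintype.card_prod, Fintype.card_fin, smul_eq_mul]
  push_cast
  field_simp
  ring

theorem isoState_weights_bounds {d F c s : ℝ} (hd : 1 < d) (hdF : 1 ≤ d * F) (hF : F ≤ 1)
    (hc : c * (d ^ 2 - 1) = 1 - F) (hs : s * d = F - c) : 0 ≤ c ∧ c ≤ s ∧ 0 < s := by
  have hd2 : 0 < d ^ 2 - 1 := by nlinarith
  have hc0 : 0 ≤ c := nonneg_of_mul_nonneg_left (a := c) (by linarith) hd2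
  have hcF : c * (d + 1) ≤ F := le_of_mul_le_mul_right (by nlinarith) (sub_pos.mpr hd)
  have hcs : c ≤ s := le_of_mul_le_mul_right (by linarith) (by linarith : (0 : ℝ) < d)
  exact ⟨hc0, hcs, by nlinarith⟩

/-- For `F ∈ [1/d, 1]`, the trace norm of the partial transpose of the isotropic state
(the sum of the absolute values of the eigenvalues of `ρ_F^Γ`) equals `d·F`, and hence
the logarithmic negativity of `ρ_F` equals `log(dF) = log d + log F`. -/
theorem traceNorm_ptranspose_isoState (d : ℕ) (hd : 2 ≤ d) (F : ℝ)
    (hF : F ∈ Set.Icc (1 / (d : ℝ)) 1)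
    (hH : (ptranspose (isoState d F)).IsHermitian) :
    ∑ i, |hH.eigenvalues i| = d * F ∧
      Real.log (∑ i, |hH.eigenvalues i|) = Real.log d + Real.log F := by
  obtain ⟨hF1, hF2⟩ := hF
  have hd1 : (1 : ℝ) < d := by exact_mod_cast hd
  have hdF : 1 ≤ d * F := by rwa [div_le_iff₀' (by positivity)] at hF1
  have hF0 : 0 < F := lt_of_lt_of_le (by positivity) hF1
  obtain ⟨c, hc_def⟩ : ∃ c : ℝ, (1 - F) / ((d : ℝ) ^ 2 - 1) = c := ⟨_, rfl⟩
  obtain ⟨s, hs_def⟩ : ∃ s : ℝ, (F - c) / d = s := ⟨_, rfl⟩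
  have hc' : c * ((d : ℝ) ^ 2 - 1) = 1 - F := hc_def ▸ div_mul_cancel₀ _ (by nlinarith)
  have hs' : s * d = F - c := hs_def ▸ div_mul_cancel₀ _ (by positivity)
  obtain ⟨hc, hcs, hs⟩ := isoState_weights_bounds hd1 hdF hF2 hc' hs'
  have hA : ptranspose (isoState d F) = (c : ℂ) • 1 + (s : ℂ) • swapMatrix (Fin d) ℂ := by
    rw [isoState, hc_def, ptranspose_smul_projMaxEnt_add_smul_one_sub, ← hs_def]
    push_cast
    rfl
  have hsq : (ptranspose (isoState d F) - (c : ℂ) • 1) * (ptranspose (isoState d F) - (c : ℂ) • 1)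
      = ((s ^ 2 : ℝ) : ℂ) • 1 := by
    rw [hA, add_sub_cancel_left, smul_mul_smul, swapMatrix_mul_self, Complex.ofReal_pow, sq]
  have hnorm := hH.sum_abs_eigenvalues_mul_eq hsq hc hcs
  rw [trace_ptranspose, trace_isoState hd, Fintype.card_prod, Fintype.card_fin] at hnorm
  have hsum : ∑ i, |hH.eigenvalues i| = d * F := by
    refine mul_right_cancel₀ hs.ne' (hnorm.trans ?_)
    rw [RCLike.one_re, Nat.cast_mul]
    linear_combination (s * d - c) * hs' - c * hc'
  exact ⟨hsum, by rw [hsum, Real.log_mul (by positivity) (by positivity)]⟩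
end
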